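/- Let G be a finite simple graph, and suppose {x_1,y_1} and {x_2,y_2} are disjoint regular edges of G such that the induced subgraph of G on the four vertices {x_1,y_1,x_2,y_2} is not a 4-cycle. Then in the contraction graph H = G_{{x_1,y_1}} (which has its unique loop at x_1), the edge {x_2,y_2} is again a regular edge. -/

import Mathlib

open MvPolynomial

/-- A graph possibly with loops: a symmetric relation on `V`. -/
structure LoopGraph (V : Type*) where
  Adj : V → V → Prop
  symm : ∀ u v : V, Adj u v → Adj v u

/-- The edge ideal of a graph possibly with loops. -/
noncomputable def LoopGraph.edgeIdeal (k : Type*) [Field k] {V : Type*}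
    (G : LoopGraph V) : Ideal (MvPolynomial V k) :=
  Ideal.span {p | ∃ u v : V, G.Adj u v ∧ p = X u * X v}

/-- An edge `{u,v}` of a graph possibly with loops is regular if no associated prime of
`R/I(G)` contains both `u` and `v`. -/
def LoopGraph.IsRegularEdge (k : Type*) [Field k] {V : Type*}
    (G : LoopGraph V) (u v : V) : Prop :=
  ∀ P ∈ associatedPrimes (MvPolynomial V k)
      (MvPolynomial V k ⧸ G.edgeIdeal k), ¬(X u ∈ P ∧ X v ∈ P)

/-- `X` is a vertex cover of a simple graph `G`. -/
def SimpleGraph.IsVtxCover {V : Type*} (G : SimpleGraph V) (X : Set V) : Prop :=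
  ∀ ⦃u v : V⦄, G.Adj u v → u ∈ X ∨ v ∈ X

/-- `X` is a minimal vertex cover of `G`. -/
def SimpleGraph.IsMinVertexCover {V : Type*} (G : SimpleGraph V) (X : Set V) : Prop :=
  G.IsVtxCover X ∧ ∀ Y ⊆ X, G.IsVtxCover Y → Y = X

/-- An edge `{x,y}` of a simple graph is regular: no minimal vertex cover contains
both endpoints. -/
def SimpleGraph.IsRegularEdge {V : Type*} (G : SimpleGraph V) (x y : V) : Prop :=
  ∀ X : Set V, G.IsMinVertexCover X → ¬(x ∈ X ∧ y ∈ X)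

/-- The contraction `G_e` of a simple graph along the edge `e = {x,y}`: identify `y`
with `x`; it acquires a loop at `x`. -/
def SimpleGraph.contractEdge {V : Type*} (G : SimpleGraph V) (x y : V) :
    LoopGraph {v : V // v ≠ y} where
  Adj a b := G.Adj a.1 b.1 ∨ (a.1 = x ∧ G.Adj y b.1) ∨ (b.1 = x ∧ G.Adj a.1 y)
  symm := by
    rintro ⟨a, ha⟩ ⟨b, hb⟩ (h | ⟨h1, h2⟩ | ⟨h1, h2⟩)
    · exact Or.inl h.symm
    · exact Or.inr (Or.inr ⟨h1, h2.symm⟩)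
    · exact Or.inr (Or.inl ⟨h1, h2.symm⟩)

/-!
If `{x₂, y₂}` lies in an associated prime `P = √(I(H) : f)` of the contraction `H`, a monomial
of `f` outside `I(H)` has an independent support containing an `H`-neighbour `a` of `x₂` and an
`H`-neighbour `b` of `y₂`. Lifting them to `G`-neighbours `c` of `x₂` and `d` of `y₂`, regularity
of `{x₂, y₂}` in `G` makes `c` and `d` adjacent, so `a` and `b` are adjacent in `H`; independence
then forces `a = b`, i.e. `{c, d} = {x₁, y₁}`, and the four vertices induce a 4-cycle.
-/

namespace SimpleGraph

variable {V : Type*} {G : SimpleGraph V}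

theorem IsIndepSet.exists_maximal_superset {s : Set V} (hs : G.IsIndepSet s) :
    ∃ M, s ⊆ M ∧ Maximal G.IsIndepSet M :=
  zorn_subset_nonempty {t | G.IsIndepSet t}
    (fun c hc hchain _ ↦ ⟨⋃₀ c, hchain.pairwise_sUnion.2 hc, fun _ ↦ Set.subset_sUnion_of_mem⟩)
    s hs

theorem isVtxCover_iff_isIndepSet_compl {X : Set V} : G.IsVtxCover X ↔ G.IsIndepSet Xᶜ := by
  refine ⟨fun h u hu v hv _ huv ↦ ?_, fun h u v huv ↦ ?_⟩
  · exact (h huv).elim hu hv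
  · by_contra! hc
    exact h hc.1 hc.2 huv.ne huv

theorem isMinVertexCover_compl_of_maximal {M : Set V} (hM : Maximal G.IsIndepSet M) :
    G.IsMinVertexCover Mᶜ := by
  refine ⟨isVtxCover_iff_isIndepSet_compl.2 (by simpa using hM.1), fun Y hY hYcov ↦ ?_⟩
  have hMY : M ⊆ Yᶜ := Set.subset_compl_comm.1 hY
  rw [← compl_compl Y, hMY.antisymm' (hM.2 (isVtxCover_iff_isIndepSet_compl.1 hYcov) hMY)]

theorem contractEdge_not_adj_self {x y : V} {u : {v : V // v ≠ y}} (hu : u.1 ≠ x) :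
    ¬ (G.contractEdge x y).Adj u u := by
  rintro (h | ⟨h, -⟩ | ⟨h, -⟩)
  · exact G.loopless.irrefl _ h
  all_goals exact hu h

/-- Otherwise `{a, b}` extends to a maximal independent set, whose complement is a minimal
vertex cover containing `x` and `y`. -/
theorem IsRegularEdge.adj_of_adj_of_adj {x y a b : V} (hr : G.IsRegularEdge x y)
    (ha : G.Adj x a) (hb : G.Adj y b) : G.Adj a b := by
  by_contra hab
  have hind : G.IsIndepSet {a, b} := by
    rw [isIndepSet_iff, Set.pairwise_pair]
    exact fun _ ↦ ⟨hab, fun h ↦ hab h.symm⟩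
  obtain ⟨M, hsub, hM⟩ := hind.exists_maximal_superset
  refine hr Mᶜ (isMinVertexCover_compl_of_maximal hM) ⟨fun hx ↦ ?_, fun hy ↦ ?_⟩
  · exact hM.1 hx (hsub (Set.mem_insert a {b})) ha.ne ha
  · exact hM.1 hy (hsub (Set.mem_insert_of_mem a rfl)) hb.ne hb

end SimpleGraph

section Contraction

variable {V : Type*} [DecidableEq V] {x y : V}

/-- The vertex map of `G.contractEdge x y`: its adjacency is exactly the image of `G.Adj`. -/
def mergeVertex (hxy : x ≠ y) (v : V) : {v : V // v ≠ y} :=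
  if h : v = y then ⟨x, hxy⟩ else ⟨v, h⟩

theorem mergeVertex_of_ne (hxy : x ≠ y) {v : V} (hv : v ≠ y) : mergeVertex hxy v = ⟨v, hv⟩ :=
  dif_neg hv

theorem mergeVertex_self (hxy : x ≠ y) : mergeVertex hxy y = ⟨x, hxy⟩ :=
  dif_pos rfl

theorem eq_or_of_mergeVertex_eq_mergeVertex (hxy : x ≠ y) {c d : V}
    (h : mergeVertex hxy c = mergeVertex hxy d) : c = d ∨ (c = x ∧ d = y) ∨ (c = y ∧ d = x) := by
  unfold mergeVertex at h
  split_ifs at h with hc hd hd <;> simp only [Subtype.mk.injEq] at h <;> grind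

namespace SimpleGraph

variable (G : SimpleGraph V)

theorem contractEdge_adj_mergeVertex (hxy : x ≠ y) {c d : V} (h : G.Adj c d) :
    (G.contractEdge x y).Adj (mergeVertex hxy c) (mergeVertex hxy d) := by
  unfold mergeVertex
  split_ifs with hc hd hd
  · exact absurd (hc.trans hd.symm) h.ne
  · exact Or.inr (Or.inl ⟨rfl, hc ▸ h⟩)
  · exact Or.inr (Or.inr ⟨rfl, hd ▸ h⟩)
  · exact Or.inl h

theorem exists_adj_mergeVertex_eq_of_contractEdge_adj (hxy : x ≠ y)
    {u a : {v : V // v ≠ y}} (hu : u.1 ≠ x) (h : (G.contractEdge x y).Adj u a) :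
    ∃ c, G.Adj u c ∧ mergeVertex hxy c = a := by
  rcases h with h | ⟨h, -⟩ | ⟨ha, h⟩
  · exact ⟨a, h, mergeVertex_of_ne hxy a.2⟩
  · exact absurd h hu
  · exact ⟨y, h, (mergeVertex_self hxy).trans (Subtype.ext ha.symm)⟩

end SimpleGraph

end Contraction

theorem Finsupp.single_add_single_le_of_ne {ι : Type*} {a b : ι} {m : ι →₀ ℕ} (hab : a ≠ b)
    (ha : 0 < m a) (hb : 0 < m b) : single a 1 + single b 1 ≤ m := by
  classical
  intro s
  simp only [Finsupp.add_apply, Finsupp.single_apply]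
  split_ifs <;> grind

theorem Ideal.Quotient.mem_radical_colon_mk_iff {R : Type*} [CommRing R] {I : Ideal R} {f r : R} :
    r ∈ ((⊥ : Submodule R (R ⧸ I)).colon {Ideal.Quotient.mk I f}).radical ↔
      ∃ n, r ^ n * f ∈ I := by
  simp only [Ideal.mem_radical_iff, Submodule.mem_colon_singleton, Submodule.mem_bot,
    Algebra.smul_def, Ideal.Quotient.algebraMap_eq, ← map_mul, Ideal.Quotient.eq_zero_iff_mem]

namespace LoopGraph

variable {k : Type*} [Field k] {W : Type*} (H : LoopGraph W)

theorem edgeIdeal_eq_span_monomial : H.edgeIdeal k = Ideal.span ((fun d ↦ monomial d (1 : k)) ''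
    ((fun e : W × W ↦ Finsupp.single e.1 1 + Finsupp.single e.2 1) '' {e | H.Adj e.1 e.2})) := by
  rw [Set.image_image, edgeIdeal]
  congr 1
  ext p
  simp [X, monomial_mul, eq_comm]

theorem mem_edgeIdeal_iff {p : MvPolynomial W k} :
    p ∈ H.edgeIdeal k ↔ ∀ d ∈ p.support, ∃ u v, H.Adj u v ∧
      Finsupp.single u 1 + Finsupp.single v 1 ≤ d := by
  simp [edgeIdeal_eq_span_monomial, mem_ideal_span_monomial_image]

theorem exists_adj_pos_of_edge_le_single_add {p q u : W} {n : ℕ} {m : W →₀ ℕ} (hpq : H.Adj p q)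
    (hle : Finsupp.single p 1 + Finsupp.single q 1 ≤ Finsupp.single u n + m)
    (hm : ¬ Finsupp.single p 1 + Finsupp.single q 1 ≤ m) (hu : ¬ H.Adj u u) :
    ∃ a, 0 < m a ∧ H.Adj u a := by
  classical
  have pos_of_left_eq : ∀ {a b : W}, a = u → b ≠ u →
      Finsupp.single a 1 + Finsupp.single b 1 ≤ Finsupp.single u n + m → 0 < m b := by
    intro a b ha hb hle
    have := hle b
    simp only [Finsupp.add_apply, Finsupp.single_apply] at this
    grind
  by_cases hp : p = u <;> by_cases hq : q = u
  · subst hp hq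
    exact absurd hpq hu
  · exact ⟨q, pos_of_left_eq hp hq hle, hp ▸ hpq⟩
  · exact ⟨p, pos_of_left_eq hq hp (add_comm (Finsupp.single p 1) _ ▸ hle), hq ▸ H.symm p q hpq⟩
  · refine absurd (fun s ↦ ?_) hm
    have := hle s
    simp only [Finsupp.add_apply, Finsupp.single_apply] at this ⊢
    grind

/-- Write `P = √(I : f)`. A monomial `m` of `f` outside `I` has an independent support `S`, and
for `X u ∈ P` some `X u ^ n * m` lies in `I`, which forces a neighbour of `u` into `S`. -/
theorem exists_pairwise_not_adj_of_mem_associatedPrimes {P : Ideal (MvPolynomial W k)}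
    (hP : P ∈ associatedPrimes (MvPolynomial W k) (MvPolynomial W k ⧸ H.edgeIdeal k)) :
    ∃ S : Set W, S.Pairwise (fun a b ↦ ¬ H.Adj a b) ∧
      ∀ u, X u ∈ P → ¬ H.Adj u u → ∃ a ∈ S, H.Adj u a := by
  obtain ⟨hprime, q, rfl⟩ := hP
  obtain ⟨f, rfl⟩ := Ideal.Quotient.mk_surjective q
  simp only [Ideal.Quotient.mem_radical_colon_mk_iff]
  have hf : f ∉ H.edgeIdeal k := fun hf ↦
    hprime.ne_top ((Ideal.eq_top_iff_one _).2
      (Ideal.Quotient.mem_radical_colon_mk_iff.2 ⟨0, by simpa using hf⟩))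
  obtain ⟨m, hm, hmind⟩ : ∃ m ∈ f.support, ∀ u v, H.Adj u v →
      ¬ Finsupp.single u 1 + Finsupp.single v 1 ≤ m := by
    simpa [mem_edgeIdeal_iff] using hf
  refine ⟨{a | 0 < m a}, fun a ha b hb hab hadj ↦
    hmind a b hadj (Finsupp.single_add_single_le_of_ne hab ha hb), fun u ⟨n, hn⟩ hu ↦ ?_⟩
  have hnm : Finsupp.single u n + m ∈ (X u ^ n * f).support := by
    rwa [mem_support_iff, X_pow_eq_monomial, coeff_monomial_mul, one_mul, ← mem_support_iff]
  obtain ⟨p, q, hpq, hle⟩ := (H.mem_edgeIdeal_iff.1 hn) _ hnm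
  exact H.exists_adj_pos_of_edge_le_single_add hpq hle (hmind p q hpq) hu

end LoopGraph

theorem regular_edge_descends_to_contraction_general
    {k : Type*} [Field k] {V : Type*}
    (G : SimpleGraph V) (x₁ y₁ x₂ y₂ : V)
    (h12 : x₁ ≠ x₂) (h1y2 : x₁ ≠ y₂) (hy12 : y₁ ≠ x₂) (hy1y2 : y₁ ≠ y₂)
    (he₁ : G.Adj x₁ y₁)
    (hr₂ : G.IsRegularEdge x₂ y₂)
    (hnc : ¬((G.Adj x₂ x₁ ∧ G.Adj y₂ y₁ ∧ ¬ G.Adj x₂ y₁ ∧ ¬ G.Adj y₂ x₁) ∨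
             (G.Adj x₂ y₁ ∧ G.Adj y₂ x₁ ∧ ¬ G.Adj x₂ x₁ ∧ ¬ G.Adj y₂ y₁))) :
    (G.contractEdge x₁ y₁).IsRegularEdge k
      ⟨x₂, hy12.symm⟩ ⟨y₂, hy1y2.symm⟩ := by
  classical
  rintro P hP ⟨hx₂, hy₂⟩
  obtain ⟨S, hS, hdom⟩ :=
    (G.contractEdge x₁ y₁).exists_pairwise_not_adj_of_mem_associatedPrimes hP
  obtain ⟨a, ha, hx₂a⟩ := hdom _ hx₂ (G.contractEdge_not_adj_self h12.symm)
  obtain ⟨b, hb, hy₂b⟩ := hdom _ hy₂ (G.contractEdge_not_adj_self h1y2.symm)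
  obtain ⟨c, hc, rfl⟩ := G.exists_adj_mergeVertex_eq_of_contractEdge_adj he₁.ne h12.symm hx₂a
  obtain ⟨d, hd, rfl⟩ := G.exists_adj_mergeVertex_eq_of_contractEdge_adj he₁.ne h1y2.symm hy₂b
  have hcd : G.Adj c d := hr₂.adj_of_adj_of_adj hc hd
  have hno_common : ∀ {v}, G.Adj x₂ v → ¬ G.Adj y₂ v := fun hxv hyv ↦
    G.loopless.irrefl _ (hr₂.adj_of_adj_of_adj hxv hyv)
  refine hS ha hb (fun hcd' ↦ ?_) (G.contractEdge_adj_mergeVertex he₁.ne hcd)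
  rcases eq_or_of_mergeVertex_eq_mergeVertex he₁.ne hcd' with rfl | ⟨rfl, rfl⟩ | ⟨rfl, rfl⟩
  · exact G.loopless.irrefl _ hcd
  · exact hnc (Or.inl ⟨hc, hd, fun h ↦ hno_common h hd, hno_common hc⟩)
  · exact hnc (Or.inr ⟨hc, hd, fun h ↦ hno_common h hd, hno_common hc⟩)

/-- if `{x₁,y₁}` and `{x₂,y₂}` are disjoint regular edges of a simple graph
`G` whose four vertices do not induce a 4-cycle, then `{x₂,y₂}` is a regular edge of the
contraction `H = G_{x₁ y₁}`. -/
theorem regular_edge_descends_to_contraction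
    {k : Type*} [Field k] {V : Type*} [Fintype V]
    (G : SimpleGraph V) (x₁ y₁ x₂ y₂ : V)
    (h12 : x₁ ≠ x₂) (h1y2 : x₁ ≠ y₂) (hy12 : y₁ ≠ x₂) (hy1y2 : y₁ ≠ y₂)
    (he₁ : G.Adj x₁ y₁) (he₂ : G.Adj x₂ y₂)
    (hr₁ : G.IsRegularEdge x₁ y₁) (hr₂ : G.IsRegularEdge x₂ y₂)
    (hnc : ¬((G.Adj x₂ x₁ ∧ G.Adj y₂ y₁ ∧ ¬ G.Adj x₂ y₁ ∧ ¬ G.Adj y₂ x₁) ∨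
             (G.Adj x₂ y₁ ∧ G.Adj y₂ x₁ ∧ ¬ G.Adj x₂ x₁ ∧ ¬ G.Adj y₂ y₁))) :
    (G.contractEdge x₁ y₁).IsRegularEdge k
      ⟨x₂, hy12.symm⟩ ⟨y₂, hy1y2.symm⟩ :=
  regular_edge_descends_to_contraction_general G x₁ y₁ x₂ y₂ h12 h1y2 hy12 hy1y2 he₁ hr₂ hnc
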